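/- With σ(t) = max(t,0), the following identities hold for all x ∈ [0,1]: (i) T_1(x) = 2σ(x) − 4σ(x − 1/2) + 2σ(x − 1); and (ii) for every n ∈ ℕ₊, writing S_n := T_n/4^n, one has S_{n+1}(x) = σ(S_n(x)/2) − σ(S_n(x) − 2^{−2n−1}) + σ(S_n(x)/2 − 2^{−2n−1}). -/
import Mathlib


noncomputable section

open Finset

/-- The sawtooth function `T₁`. -/
def T1 (x : ℝ) : ℝ := if x ≤ 1 / 2 then 2 * x else 2 * (1 - x)

/-- `R_U(x) = x - ∑_{i=1}^U T_i(x)/4^i`, where `T_i = T₁∘⋯∘T₁` (`i` times). -/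
def RU (U : ℕ) (x : ℝ) : ℝ := x - ∑ i ∈ Finset.Icc 1 U, T1^[i] x / 4 ^ i

/-- The approximate product `×̃_{M,U}`. -/
def aprod (M : ℝ) (U : ℕ) (x y : ℝ) : ℝ :=
  2 * M ^ 2 * (RU U ((x + y) / (2 * M)) - (1 / 4) * RU U (x / M) - (1 / 4) * RU U (y / M))

/-- The ReLU function. -/
def relu (t : ℝ) : ℝ := max t 0

lemma T1_mem {x : ℝ} (hx : x ∈ Set.Icc (0 : ℝ) 1) : T1 x ∈ Set.Icc (0 : ℝ) 1 := by
  obtain ⟨h0, h1⟩ := hx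
  unfold T1
  split <;> constructor <;> linarith

lemma T1_iter_mem (n : ℕ) {x : ℝ} (hx : x ∈ Set.Icc (0 : ℝ) 1) :
    T1^[n] x ∈ Set.Icc (0 : ℝ) 1 := by
  induction n with
  | zero => simpa using hx
  | succ n ih => rw [Function.iterate_succ_apply']; exact T1_mem ih

theorem stmt10 :
    (∀ x ∈ Set.Icc (0 : ℝ) 1,
      T1 x = 2 * relu x - 4 * relu (x - 1 / 2) + 2 * relu (x - 1)) ∧
    (∀ n : ℕ, 0 < n → ∀ x ∈ Set.Icc (0 : ℝ) 1,
      T1^[n + 1] x / 4 ^ (n + 1) =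
        relu (T1^[n] x / 4 ^ n / 2) - relu (T1^[n] x / 4 ^ n - 1 / 2 ^ (2 * n + 1)) +
          relu (T1^[n] x / 4 ^ n / 2 - 1 / 2 ^ (2 * n + 1))) := by
  constructor
  · intro x hx
    obtain ⟨h0, h1⟩ := hx
    unfold T1 relu
    rcases le_or_gt x (1 / 2) with h | h
    · rw [if_pos h, max_eq_left h0, max_eq_right (by linarith), max_eq_right (by linarith)]
      ring
    · rw [if_neg (not_le.mpr h), max_eq_left h0, max_eq_left (by linarith),
        max_eq_right (by linarith)]
      ring
  · intro n _ x hx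
    obtain ⟨h0, h1⟩ := T1_iter_mem n hx
    set t := T1^[n] x with ht
    rw [Function.iterate_succ_apply', ← ht]
    have h4 : (0:ℝ) < 4 ^ n := by positivity
    have hkey : (1:ℝ) / 2 ^ (2 * n + 1) = (1 / 2) / 4 ^ n := by
      rw [pow_succ, pow_mul]; norm_num; ring
    have e3 : t / 4 ^ n / 2 = (t / 2) / 4 ^ n := by ring
    unfold T1 relu
    rw [hkey]
    rcases le_or_gt t (1 / 2) with h | h
    · rw [if_pos h, max_eq_left (by positivity),
        max_eq_right (by rw [← sub_div]; exact div_nonpos_of_nonpos_of_nonneg (by linarith) h4.le),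
        max_eq_right (by rw [e3, ← sub_div]; exact div_nonpos_of_nonpos_of_nonneg (by linarith) h4.le)]
      rw [pow_succ]; field_simp; ring
    · rw [if_neg (not_le.mpr h), max_eq_left (by positivity),
        max_eq_left (by rw [← sub_div]; exact div_nonneg (by linarith) h4.le),
        max_eq_right (by rw [e3, ← sub_div]; exact div_nonpos_of_nonpos_of_nonneg (by linarith) h4.le)]
      rw [pow_succ]; field_simp; ring
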